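/- arXiv:1910.04947 — 5 statements merged into one kernel-verified Lean document; each statement's English description precedes it below -/
import Mathlib

section
/- Let n > 1 and let B₂(x) = x² − x + 1/6 be the second Bernoulli polynomial. For each divisor d of n, the average (1/φ(n/d)) · Σ_{0 ≤ i < n, gcd(i,n)=d} B₂(i/n) equals (1/6)·λ(n/d)/(n/d)², where λ(m) = ∏_{p | m, p prime} (−p). -/
/-!
Write `m = n / d`. Dividing by `d` matches the indices `i < n` with `gcd i n = d` with the
residues `j < m` coprime to `m`, so the sum is the primitive sum
`P m = ∑_{j < m, (j, m) = 1} B₂(j / m)`. Grouping all `j < m` by `gcd j m` gives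
`∑_{e ∣ m} P e = ∑_{j < m} B₂(j / m) = 1 / (6m)`, and Möbius inversion yields
`P m = (1 / 6m) ∑_{a ∣ m} μ(a) a = (1 / 6m) ∏_{p ∣ m} (1 - p)`. Finally `1 - p = -p (1 - 1/p)`
and `φ(m) = m ∏_{p ∣ m} (1 - 1/p)` turn this into `φ(m) λ(m) / (6 m²)`.
-/

/-- `λ(m) = ∏_{p | m, p prime} (−p)` as a rational number. -/
noncomputable def lambdaFun (m : ℕ) : ℚ := ∏ p ∈ m.primeFactors, (-(p : ℚ))

/-- The second Bernoulli polynomial `B₂(x) = x² − x + 1/6`. -/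
def bernoulli2 (x : ℚ) : ℚ := x ^ 2 - x + 1 / 6

open Finset ArithmeticFunction
open scoped ArithmeticFunction.Moebius Nat

theorem ArithmeticFunction.IsMultiplicative.prodPrimeFactors_one_sub {R : Type*} [CommRing R]
    {f : ArithmeticFunction R} (hf : f.IsMultiplicative) {n : ℕ} (hn : n ≠ 0) :
    ∏ p ∈ n.primeFactors, (1 - f p) = ∑ d ∈ n.divisors, (μ d : R) * f d := by
  -- only squarefree divisors contribute, and they are exactly the divisors of the radical
  rw [← Nat.primeFactors_radical, hf.prodPrimeFactors_one_sub_of_squarefree f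
    UniqueFactorizationMonoid.squarefree_radical]
  refine sum_subset (Nat.divisors_subset_of_dvd hn UniqueFactorizationMonoid.radical_dvd_self)
    fun d hd hd' => ?_
  have hsq : ¬Squarefree d := fun hsq => hd' <| Nat.mem_divisors.mpr
    ⟨(UniqueFactorizationMonoid.dvd_radical_iff hsq.isRadical hn).mpr
      (Nat.dvd_of_mem_divisors hd),
      UniqueFactorizationMonoid.radical_ne_zero⟩
  simp [moebius_eq_zero_of_not_squarefree hsq]

section

variable {M : Type*} [AddCommMonoid M] (f : ℚ → M)

def primitiveSum (m : ℕ) : M :=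
  ∑ j ∈ range m with j.Coprime m, f (j / m)

theorem sum_filter_gcd_eq_primitiveSum {n d : ℕ} (hd : d ∣ n) :
    ∑ i ∈ range n with i.gcd n = d, f (i / n) = primitiveSum f (n / d) := by
  rcases eq_or_ne n 0 with rfl | hn
  · simp [primitiveSum]
  obtain ⟨m, rfl⟩ := hd
  have hd0 : 0 < d := Nat.pos_of_ne_zero (left_ne_zero_of_mul hn)
  rw [primitiveSum, Nat.mul_div_cancel_left m hd0]
  refine sum_nbij' (· / d) (d * ·) ?_ ?_ ?_ ?_ ?_
  · rintro i hi
    simp only [mem_filter, mem_range] at hi ⊢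
    obtain ⟨j, rfl⟩ : d ∣ i := hi.2 ▸ Nat.gcd_dvd_left i (d * m)
    rw [Nat.gcd_mul_left, Nat.mul_eq_left hd0.ne'] at hi
    simpa [hd0] using hi
  · rintro j hj
    simp only [mem_filter, mem_range] at hj ⊢
    rw [Nat.gcd_mul_left, hj.2, mul_one]
    exact ⟨by gcongr; exact hj.1, rfl⟩
  · rintro i hi
    simp only [mem_filter, mem_range] at hi
    exact Nat.mul_div_cancel' (hi.2 ▸ Nat.gcd_dvd_left i (d * m))
  · rintro j -
    exact Nat.mul_div_cancel_left j hd0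
  · rintro i hi
    simp only [mem_filter, mem_range] at hi
    obtain ⟨j, rfl⟩ : d ∣ i := hi.2 ▸ Nat.gcd_dvd_left i (d * m)
    rw [Nat.mul_div_cancel_left j hd0]
    push_cast
    rw [mul_div_mul_left _ _ (by exact_mod_cast hd0.ne')]

theorem sum_divisors_primitiveSum {n : ℕ} (hn : n ≠ 0) :
    ∑ e ∈ n.divisors, primitiveSum f e = ∑ i ∈ range n, f (i / n) :=
  calc ∑ e ∈ n.divisors, primitiveSum f e
      = ∑ e ∈ n.divisors, primitiveSum f (n / e) := (Nat.sum_div_divisors n _).symm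
    _ = ∑ e ∈ n.divisors, ∑ i ∈ range n with i.gcd n = e, f (i / n) :=
      sum_congr rfl fun _ he =>
        (sum_filter_gcd_eq_primitiveSum f (Nat.dvd_of_mem_divisors he)).symm
    _ = ∑ i ∈ range n, f (i / n) :=
      sum_fiberwise_of_maps_to (fun i _ => Nat.mem_divisors.mpr ⟨Nat.gcd_dvd_right i n, hn⟩) _

end


theorem sum_range_bernoulli2_mul (k : ℕ) (x : ℚ) :
    ∑ j ∈ range k, bernoulli2 (j * x) =
      x ^ 2 * k * (k - 1) * (2 * k - 1) / 6 - x * k * (k - 1) / 2 + k / 6 := by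
  induction k with
  | zero => simp
  | succ k ih => rw [sum_range_succ, ih, bernoulli2]; push_cast; ring

theorem sum_range_bernoulli2_div {m : ℕ} (hm : m ≠ 0) :
    ∑ j ∈ range m, bernoulli2 (j / m) = 1 / (6 * m) := by
  simp only [div_eq_mul_inv (_ : ℚ) (m : ℚ), sum_range_bernoulli2_mul]
  field_simp
  ring

theorem prod_one_sub_eq_lambdaFun_mul (m : ℕ) :
    ∏ p ∈ m.primeFactors, (1 - (p : ℚ)) =
      lambdaFun m * ∏ p ∈ m.primeFactors, (1 - (p : ℚ)⁻¹) := by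
  rw [lambdaFun, ← prod_mul_distrib]
  refine prod_congr rfl fun p hp => ?_
  have : (p : ℚ) ≠ 0 := Nat.cast_ne_zero.mpr (Nat.pos_of_mem_primeFactors hp).ne'
  field_simp
  ring

theorem primitiveSum_bernoulli2_eq_prod {m : ℕ} (hm : m ≠ 0) :
    primitiveSum bernoulli2 m = (∏ p ∈ m.primeFactors, (1 - (p : ℚ))) / (6 * m) := by
  have hmoebius := (sum_eq_iff_sum_mul_moebius_eq (f := primitiveSum bernoulli2)
    (g := fun k => 1 / (6 * (k : ℚ)))).mp (fun k hk =>
      (sum_divisors_primitiveSum _ hk.ne').trans (sum_range_bernoulli2_div hk.ne'))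
    m (Nat.pos_of_ne_zero hm)
  have hprod : ∏ p ∈ m.primeFactors, (1 - (p : ℚ)) = ∑ a ∈ m.divisors, (μ a : ℚ) * a := by
    simpa using (isMultiplicative_id.natCast (R := ℚ)).prodPrimeFactors_one_sub hm
  rw [← hmoebius, hprod, sum_div,
    Nat.sum_divisorsAntidiagonal fun a b => (μ a : ℚ) * (1 / (6 * b))]
  refine sum_congr rfl fun a ha => ?_
  obtain ⟨⟨b, rfl⟩, -⟩ := Nat.mem_divisors.mp ha
  have hab : a ≠ 0 ∧ b ≠ 0 := mul_ne_zero_iff.mp hm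
  rw [Nat.mul_div_cancel_left b (Nat.pos_of_ne_zero hab.1)]
  push_cast
  field_simp [hab.1, hab.2]

theorem primitiveSum_bernoulli2 (m : ℕ) :
    primitiveSum bernoulli2 m = φ m * lambdaFun m / (6 * m ^ 2) := by
  rcases eq_or_ne m 0 with rfl | hm
  · simp [primitiveSum]
  rw [primitiveSum_bernoulli2_eq_prod hm, prod_one_sub_eq_lambdaFun_mul,
    Nat.totient_eq_mul_prod_factors]
  have : (m : ℚ) ≠ 0 := Nat.cast_ne_zero.mpr hm
  field_simp

theorem average_bernoulli2_eq_general (n d : ℕ) (hd : d ∣ n) :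
    (1 / (Nat.totient (n / d) : ℚ)) *
      ∑ i ∈ (Finset.range n).filter (fun i => Nat.gcd i n = d), bernoulli2 ((i : ℚ) / n) =
    (1 / 6) * lambdaFun (n / d) / ((n / d : ℕ) : ℚ) ^ 2 := by
  rw [sum_filter_gcd_eq_primitiveSum _ hd, primitiveSum_bernoulli2]
  rcases eq_or_ne (n / d) 0 with h | h
  · simp [h]
  have : (φ (n / d) : ℚ) ≠ 0 := by simpa [Nat.pos_iff_ne_zero] using h
  field_simp

/-- For `n > 1` and each divisor `d` of `n`, the average
`(1/φ(n/d)) · Σ_{0 ≤ i < n, gcd(i,n)=d} B₂(i/n)` equals `(1/6)·λ(n/d)/(n/d)²`. -/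
theorem average_bernoulli2_eq (n d : ℕ) (hn : 1 < n) (hd : d ∣ n) :
    (1 / (Nat.totient (n / d) : ℚ)) *
      ∑ i ∈ (Finset.range n).filter (fun i => Nat.gcd i n = d), bernoulli2 ((i : ℚ) / n) =
    (1 / 6) * lambdaFun (n / d) / ((n / d : ℕ) : ℚ) ^ 2 :=
  average_bernoulli2_eq_general n d hd
end

section
/- For every positive integer n and every divisor t of n, Σ_{m | n} (λ(m)/m) · (φ(gcd(m, n/m))/gcd(m, n/m)) · ψ(n/m) · gcd(t, m) = n/t, where λ(m) = ∏_{p | m} (−p) and ψ(k) = k·∏_{p | k} (1 + 1/p). -/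
/-- The Dedekind psi function `ψ(k) = k·∏_{p | k} (1 + 1/p)` as a rational number. -/
noncomputable def dedekindPsi (k : ℕ) : ℚ := (k : ℚ) * ∏ p ∈ k.primeFactors, (1 + 1 / (p : ℚ))

open Finset

lemma lambdaFun_one : lambdaFun 1 = 1 := by simp [lambdaFun]

lemma dedekindPsi_one : dedekindPsi 1 = 1 := by simp [dedekindPsi]

lemma lambdaFun_mul {a b : ℕ} (hab : a.Coprime b) :
    lambdaFun (a * b) = lambdaFun a * lambdaFun b := by
  rw [lambdaFun, hab.primeFactors_mul, prod_union hab.disjoint_primeFactors, lambdaFun, lambdaFun]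

lemma dedekindPsi_mul {a b : ℕ} (hab : a.Coprime b) :
    dedekindPsi (a * b) = dedekindPsi a * dedekindPsi b := by
  simp only [dedekindPsi, hab.primeFactors_mul, prod_union hab.disjoint_primeFactors]
  push_cast
  ring

lemma lambdaFun_prime_pow {p k : ℕ} (hp : p.Prime) (hk : k ≠ 0) : lambdaFun (p ^ k) = -p := by
  rw [lambdaFun, Nat.primeFactors_prime_pow hk hp, prod_singleton]

lemma dedekindPsi_prime_pow {p k : ℕ} (hp : p.Prime) (hk : k ≠ 0) :
    dedekindPsi (p ^ k) = p ^ k * (1 + 1 / p) := by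
  rw [dedekindPsi, Nat.primeFactors_prime_pow hk hp, prod_singleton, Nat.cast_pow]

lemma totient_prime_pow_div {p k : ℕ} (hp : p.Prime) (hk : k ≠ 0) :
    (Nat.totient (p ^ k) : ℚ) / (p ^ k : ℕ) = 1 - 1 / p := by
  have hp0 : (p : ℚ) ≠ 0 := by exact_mod_cast hp.ne_zero
  obtain ⟨j, rfl⟩ := Nat.exists_eq_add_one_of_ne_zero hk
  rw [Nat.totient_prime_pow_succ hp]
  push_cast [Nat.cast_sub hp.one_le]
  field_simp
  ring

lemma Nat.gcd_pow_pow (p i k : ℕ) : Nat.gcd (p ^ i) (p ^ k) = p ^ min i k := by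
  rcases le_total i k with h | h
  · rw [min_eq_left h, Nat.gcd_eq_left (pow_dvd_pow p h)]
  · rw [min_eq_right h, Nat.gcd_eq_right (pow_dvd_pow p h)]

lemma Nat.gcd_pow_eq_pow_min {t p a c k : ℕ} (h : Nat.gcd t (p ^ a) = p ^ c) (hk : k ≤ a) :
    Nat.gcd t (p ^ k) = p ^ min c k := by
  rw [← Nat.gcd_eq_right (pow_dvd_pow p hk), ← Nat.gcd_assoc, h, Nat.gcd_pow_pow]

lemma Nat.gcd_mul_mul_of_coprime_of_dvd {a b x y u v : ℕ} (hab : a.Coprime b)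
    (hx : x ∣ a) (hu : u ∣ a) (hy : y ∣ b) (hv : v ∣ b) :
    Nat.gcd (x * y) (u * v) = Nat.gcd x u * Nat.gcd y v := by
  rw [Nat.Coprime.gcd_mul _ ((hab.coprime_dvd_left hu).coprime_dvd_right hv),
    Nat.Coprime.gcd_mul_right_cancel _ ((hab.coprime_dvd_left hu).coprime_dvd_right hy).symm,
    Nat.Coprime.gcd_mul_left_cancel _ ((hab.coprime_dvd_left hx).coprime_dvd_right hv)]

lemma Nat.sum_divisors_mul_of_coprime {M : Type*} [AddCommMonoid M] {a b : ℕ} (hab : a.Coprime b)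
    (f : ℕ → M) :
    ∑ m ∈ (a * b).divisors, f m = ∑ i ∈ a.divisors, ∑ j ∈ b.divisors, f (i * j) := by
  rw [Nat.divisors_mul, Finset.mul_def, sum_image hab.mul_injOn_divisors, sum_product]

noncomputable def cCoeff (n m : ℕ) : ℚ :=
  lambdaFun m / m * ((Nat.totient (Nat.gcd m (n / m)) : ℚ) / Nat.gcd m (n / m)) *
    dedekindPsi (n / m)

lemma cCoeff_mul {a b i j : ℕ} (hab : a.Coprime b) (hi : i ∣ a) (hj : j ∣ b) :
    cCoeff (a * b) (i * j) = cCoeff a i * cCoeff b j := by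
  have hij : i.Coprime j := (hab.coprime_dvd_left hi).coprime_dvd_right hj
  have hquot : (a / i).Coprime (b / j) :=
    (hab.coprime_dvd_left (Nat.div_dvd_of_dvd hi)).coprime_dvd_right (Nat.div_dvd_of_dvd hj)
  have hgcd : Nat.gcd (i * j) (a / i * (b / j)) = Nat.gcd i (a / i) * Nat.gcd j (b / j) :=
    Nat.gcd_mul_mul_of_coprime_of_dvd hab hi (Nat.div_dvd_of_dvd hi) hj (Nat.div_dvd_of_dvd hj)
  have htot := Nat.totient_mul <|
    (hij.coprime_dvd_left (Nat.gcd_dvd_left i (a / i))).coprime_dvd_right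
      (Nat.gcd_dvd_left j (b / j))
  rw [cCoeff, ← Nat.div_mul_div_comm hi hj, hgcd, htot, lambdaFun_mul hij, dedekindPsi_mul hquot,
    cCoeff, cCoeff]
  push_cast
  ring

lemma sum_cCoeff_mul_gcd_of_coprime {a b : ℕ} (hab : a.Coprime b) (t : ℕ) :
    ∑ m ∈ (a * b).divisors, cCoeff (a * b) m * Nat.gcd t m =
      (∑ i ∈ a.divisors, cCoeff a i * Nat.gcd t i) *
        ∑ j ∈ b.divisors, cCoeff b j * Nat.gcd t j := by
  rw [Nat.sum_divisors_mul_of_coprime hab, sum_mul_sum]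
  refine sum_congr rfl fun i hi => sum_congr rfl fun j hj => ?_
  have hi := Nat.dvd_of_mem_divisors hi
  have hj := Nat.dvd_of_mem_divisors hj
  rw [cCoeff_mul hab hi hj, Nat.Coprime.gcd_mul t ((hab.coprime_dvd_left hi).coprime_dvd_right hj)]
  push_cast
  ring

lemma cCoeff_one_right (n : ℕ) : cCoeff n 1 = dedekindPsi n := by
  simp [cCoeff, lambdaFun_one]

lemma cCoeff_self {n : ℕ} (hn : n ≠ 0) : cCoeff n n = lambdaFun n / n := by
  simp [cCoeff, Nat.div_self (Nat.pos_of_ne_zero hn), dedekindPsi_one]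

lemma cCoeff_prime_pow_of_lt {p a k : ℕ} (hp : p.Prime) (hk : k ≠ 0) (hka : k < a) :
    cCoeff (p ^ a) (p ^ k) =
      (p : ℚ) ^ ((a : ℤ) - k - k - 1) - (p : ℚ) ^ ((a : ℤ) - k - k + 1) := by
  have hx : (p : ℚ) ≠ 0 := by exact_mod_cast hp.ne_zero
  have hmin : min k (a - k) ≠ 0 := by omega
  rw [cCoeff, Nat.pow_div hka.le hp.pos, Nat.gcd_pow_pow, totient_prime_pow_div hp hmin,
    lambdaFun_prime_pow hp hk, dedekindPsi_prime_pow hp (by omega),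
    ← zpow_natCast (p : ℚ) (a - k)]
  push_cast [hka.le]
  simp only [zpow_add₀ hx, zpow_sub₀ hx, zpow_natCast, zpow_one]
  field_simp
  ring

lemma sum_range_cCoeff_prime_pow_mul {p a c : ℕ} (hp : p.Prime) (ha : a ≠ 0) (hc : c ≤ a) :
    ∑ k ∈ range (a + 1), cCoeff (p ^ a) (p ^ k) * (p : ℚ) ^ min c k =
      (p : ℚ) ^ ((a : ℤ) - c) := by
  have hx : (p : ℚ) ≠ 0 := by exact_mod_cast hp.ne_zero
  -- `tail k = ∑_{j=k}^{a} cCoeff (p^a) (p^j) p^{min c j}` for `1 ≤ k ≤ a`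
  let tail (k : ℕ) : ℚ := (p : ℚ) ^ ((a : ℤ) - c) - (p : ℚ) ^ ((a : ℤ) - min c k) -
    (p : ℚ) ^ ((a : ℤ) + min c k + 1 - k - k)
  have step (k : ℕ) (hk : k ≠ 0) (hka : k < a) :
      cCoeff (p ^ a) (p ^ k) * (p : ℚ) ^ min c k = tail k - tail (k + 1) := by
    simp only [tail, cCoeff_prime_pow_of_lt hp hk hka]
    rcases lt_or_ge k c with hkc | hkc
    · rw [min_eq_right hkc.le, min_eq_right (by omega : k + 1 ≤ c)]
      push_cast
      simp only [zpow_add₀ hx, zpow_sub₀ hx, zpow_natCast, zpow_one]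
      field_simp
      ring
    · rw [min_eq_left hkc, min_eq_left (by omega : c ≤ k + 1)]
      simp only [zpow_add₀ hx, zpow_sub₀ hx, zpow_natCast, zpow_one]
      field_simp
      ring
  obtain ⟨b, rfl⟩ := Nat.exists_eq_add_one_of_ne_zero ha
  rw [sum_range_succ, sum_range_succ',
    sum_congr rfl fun i hi => step (i + 1) i.succ_ne_zero (by simpa using hi),
    sum_range_sub' (fun i => tail (i + 1)), pow_zero, cCoeff_one_right,
    cCoeff_self (pow_ne_zero _ hp.ne_zero), dedekindPsi_prime_pow hp ha, lambdaFun_prime_pow hp ha]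
  obtain rfl | hc0 := Nat.eq_zero_or_pos c
  · simp only [tail, Nat.zero_min]
    push_cast
    simp only [zpow_add₀ hx, zpow_sub₀ hx, zpow_natCast, zpow_one]
    field_simp
    ring
  · simp only [tail, min_eq_left hc, Nat.min_zero, min_eq_right (by omega : 0 + 1 ≤ c)]
    push_cast
    simp only [zpow_add₀ hx, zpow_sub₀ hx, zpow_natCast, zpow_one]
    field_simp
    ring

theorem sum_cCoeff_mul_gcd (n t : ℕ) :
    ∑ m ∈ n.divisors, cCoeff n m * Nat.gcd t m = (n : ℚ) / Nat.gcd t n := by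
  induction n using Nat.recOnPosPrimePosCoprime with
  | prime_pow p a hp ha =>
    obtain ⟨c, hc, hgcd⟩ := (Nat.dvd_prime_pow hp).1 (Nat.gcd_dvd_right t (p ^ a))
    have hweight (k : ℕ) (hk : k ∈ range (a + 1)) :
        cCoeff (p ^ a) (p ^ k) * (Nat.gcd t (p ^ k) : ℚ) =
          cCoeff (p ^ a) (p ^ k) * (p : ℚ) ^ min c k := by
      rw [Nat.gcd_pow_eq_pow_min hgcd (by simpa [Nat.lt_succ_iff] using hk), Nat.cast_pow]
    rw [Nat.sum_divisors_prime_pow hp, sum_congr rfl hweight,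
      sum_range_cCoeff_prime_pow_mul hp ha.ne' hc, hgcd,
      zpow_sub₀ (by exact_mod_cast hp.ne_zero), zpow_natCast, zpow_natCast, Nat.cast_pow,
      Nat.cast_pow]
  | zero => simp
  | one => simp [cCoeff_one_right, dedekindPsi_one]
  | coprime a b _ _ hab iha ihb =>
    rw [sum_cCoeff_mul_gcd_of_coprime hab, iha, ihb, Nat.Coprime.gcd_mul t hab,
      Nat.cast_mul, Nat.cast_mul, div_mul_div_comm]

theorem sum_c_eq_general (n t : ℕ) (ht : t ∣ n) :
    (∑ m ∈ n.divisors,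
        (lambdaFun m / (m : ℚ)) *
          ((Nat.totient (Nat.gcd m (n / m)) : ℚ) / (Nat.gcd m (n / m) : ℚ)) *
          dedekindPsi (n / m) * (Nat.gcd t m : ℚ)) = (n : ℚ) / (t : ℚ) := by
  have h := sum_cCoeff_mul_gcd n t
  rw [Nat.gcd_eq_left ht] at h
  exact h

/-- For every positive integer `n` and every divisor `t` of `n`,
`Σ_{m | n} (λ(m)/m)·(φ(gcd(m,n/m))/gcd(m,n/m))·ψ(n/m)·gcd(t,m) = n/t`. -/
theorem sum_c_eq (n t : ℕ) (hn : 0 < n) (ht : t ∣ n) :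
    (∑ m ∈ n.divisors,
        (lambdaFun m / (m : ℚ)) *
          ((Nat.totient (Nat.gcd m (n / m)) : ℚ) / (Nat.gcd m (n / m) : ℚ)) *
          dedekindPsi (n / m) * (Nat.gcd t m : ℚ)) = (n : ℚ) / (t : ℚ) :=
  sum_c_eq_general n t ht
end

section
/- For positive integer k and m ∈ ℤ, the Ramanujan sum C_k(m) := Σ_{a ∈ (ℤ/kℤ)*} e^{2πi·am/k} equals Σ_{c | gcd(k,m)} c·μ(k/c), where μ is the Möbius function. -/
/-!
Möbius inversion detects coprimality: `[gcd(a, k) = 1] = ∑_{d ∣ gcd(a, k)} μ(d)`. Exchanging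
the sums, the inner sum runs over the multiples `a = d b` of `d`, and is a full sum of `(k/d)`-th
roots of unity, equal to `k/d` if `k/d ∣ m` and to `0` otherwise. Substituting `c = k/d` gives
the formula.
-/

open Complex Finset
open scoped ArithmeticFunction.Moebius

theorem ArithmeticFunction.sum_divisors_moebius {R : Type*} [Ring R] (n : ℕ) :
    ∑ d ∈ n.divisors, (μ d : R) = if n = 1 then 1 else 0 := by
  have h := congrArg (· n) (coe_moebius_mul_coe_zeta (R := R))
  simp only [coe_mul_zeta_apply, intCoe_apply, one_apply] at h
  exact h

theorem Nat.divisors_filter_dvd_eq_divisors_gcd {k : ℕ} (hk : k ≠ 0) (a : ℕ) :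
    {d ∈ k.divisors | d ∣ a} = (Nat.gcd a k).divisors := by
  rw [← Nat.divisors_filter_dvd_of_dvd hk (Nat.gcd_dvd_right a k)]
  refine filter_congr fun d hd => ?_
  rw [Nat.dvd_gcd_iff, and_iff_left (Nat.dvd_of_mem_divisors hd)]

theorem ArithmeticFunction.sum_filter_gcd_eq_one_eq_sum_moebius_mul {R : Type*} [Ring R]
    (s : Finset ℕ) (f : ℕ → R) {k : ℕ} (hk : k ≠ 0) :
    ∑ a ∈ s.filter (fun a => Nat.gcd a k = 1), f a =
      ∑ d ∈ k.divisors, (μ d : R) * ∑ a ∈ s.filter (d ∣ ·), f a := by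
  have hcoprime : ∀ a, (if Nat.gcd a k = 1 then f a else 0) =
      ∑ d ∈ k.divisors, if d ∣ a then (μ d : R) * f a else 0 := by
    intro a
    rw [← sum_filter, Nat.divisors_filter_dvd_eq_divisors_gcd hk, ← sum_mul,
      ArithmeticFunction.sum_divisors_moebius, ite_mul, one_mul, zero_mul]
  simp_rw [sum_filter, hcoprime, mul_sum, mul_ite, mul_zero]
  exact sum_comm

theorem IsPrimitiveRoot.sum_range_zpow_pow {K : Type*} [Field K] {ζ : K} {n : ℕ}
    (hζ : IsPrimitiveRoot ζ n) (m : ℤ) :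
    ∑ a ∈ range n, (ζ ^ m) ^ a = if (n : ℤ) ∣ m then (n : K) else 0 := by
  split_ifs with h
  · simp [(hζ.zpow_eq_one_iff_dvd m).mpr h]
  · have hpow : (ζ ^ m) ^ n = 1 := by
      rw [← zpow_natCast, ← zpow_mul, mul_comm, zpow_mul, zpow_natCast, hζ.pow_eq_one, one_zpow]
    rw [geom_sum_eq (mt (hζ.zpow_eq_one_iff_dvd m).mp h), hpow, sub_self, zero_div]

theorem Finset.sum_range_filter_dvd {M : Type*} [AddCommMonoid M] (f : ℕ → M) {d k : ℕ}
    (hdk : d ∣ k) :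
    ∑ a ∈ (range k).filter (d ∣ ·), f a = ∑ b ∈ range (k / d), f (d * b) := by
  rcases Nat.eq_zero_or_pos d with rfl | hd
  · simp [Nat.eq_zero_of_zero_dvd hdk]
  have hmultiples :
      (range k).filter (d ∣ ·) = (range (k / d)).map ⟨(d * ·), mul_right_injective₀ hd.ne'⟩ := by
    ext a
    simp only [mem_filter, mem_range, mem_map, Function.Embedding.coeFn_mk]
    constructor
    · rintro ⟨hak, b, rfl⟩
      exact ⟨b, (Nat.lt_div_iff_mul_lt' hdk b).mpr hak, rfl⟩
    · rintro ⟨b, hb, rfl⟩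
      exact ⟨(Nat.lt_div_iff_mul_lt' hdk b).mp hb, b, rfl⟩
  rw [hmultiples, sum_map]
  rfl

theorem Complex.sum_range_exp_eq_ite {n : ℕ} (hn : n ≠ 0) (m : ℤ) :
    ∑ a ∈ range n, exp (2 * Real.pi * I * a * m / n) = if (n : ℤ) ∣ m then (n : ℂ) else 0 := by
  rw [← (isPrimitiveRoot_exp n hn).sum_range_zpow_pow m]
  refine sum_congr rfl fun a _ => ?_
  rw [← exp_int_mul, ← exp_nat_mul]
  ring_nf

theorem Complex.sum_range_filter_dvd_exp_eq_ite {d k : ℕ} (hk : k ≠ 0) (hdk : d ∣ k) (m : ℤ) :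
    ∑ a ∈ (range k).filter (d ∣ ·), exp (2 * Real.pi * I * a * m / k) =
      if ((k / d : ℕ) : ℤ) ∣ m then ((k / d : ℕ) : ℂ) else 0 := by
  obtain ⟨e, rfl⟩ := hdk
  have hd : d ≠ 0 := left_ne_zero_of_mul hk
  rw [sum_range_filter_dvd _ (dvd_mul_right d e), Nat.mul_div_cancel_left e (Nat.pos_of_ne_zero hd),
    ← sum_range_exp_eq_ite (right_ne_zero_of_mul hk) m]
  refine sum_congr rfl fun b _ => ?_
  push_cast
  field_simp

theorem Nat.divisors_filter_intCast_dvd {k : ℕ} (hk : k ≠ 0) (m : ℤ) :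
    k.divisors.filter (fun c : ℕ => (c : ℤ) ∣ m) = (Int.gcd k m).divisors := by
  have hgcd : Int.gcd k m ≠ 0 := by simp [Int.gcd_eq_zero_iff, hk]
  ext c
  simp only [mem_filter, Nat.mem_divisors, Int.dvd_gcd_iff, Int.natCast_dvd_natCast, hk, hgcd,
    ne_eq, not_false_eq_true, and_true]

/-- For a positive integer `k` and `m ∈ ℤ`, the Ramanujan sum
`C_k(m) = Σ_{a ∈ (ℤ/kℤ)*} e^{2πi·am/k}` equals `Σ_{c | gcd(k,m)} c·μ(k/c)`. -/
theorem ramanujan_sum_eq (k : ℕ) (hk : 0 < k) (m : ℤ) :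
    (∑ a ∈ (Finset.range k).filter (fun a => Nat.gcd a k = 1),
        Complex.exp (2 * Real.pi * Complex.I * a * m / k)) =
      ∑ c ∈ (Int.gcd k m).divisors, (c : ℂ) * (ArithmeticFunction.moebius (k / c) : ℂ) := by
  calc _ = ∑ d ∈ k.divisors,
          (μ d : ℂ) * if ((k / d : ℕ) : ℤ) ∣ m then ((k / d : ℕ) : ℂ) else 0 := by
        rw [ArithmeticFunction.sum_filter_gcd_eq_one_eq_sum_moebius_mul _ _ hk.ne']
        refine sum_congr rfl fun d hd => ?_
        rw [sum_range_filter_dvd_exp_eq_ite hk.ne' (Nat.dvd_of_mem_divisors hd)]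
    _ = ∑ c ∈ k.divisors, if (c : ℤ) ∣ m then (c : ℂ) * (μ (k / c) : ℂ) else 0 := by
        rw [← Nat.sum_div_divisors]
        refine sum_congr rfl fun c hc => ?_
        rw [Nat.div_div_self (Nat.dvd_of_mem_divisors hc) hk.ne', mul_ite, mul_zero, mul_comm]
    _ = _ := by rw [← sum_filter, Nat.divisors_filter_intCast_dvd hk.ne']
end

section
/- The number of cusps of Γ₀(n) equals Σ_{c | n} φ(gcd(c, n/c)). -/
open Matrix

/-- A primitive vector in `ℤ²`, representing the cusp `a/c ∈ ℚ ∪ {∞}` (with `v = (a, c)`);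
`ℚ ∪ {∞}` is identified with the primitive vectors modulo `±1`, and `-1 ∈ Γ₀(n)`, so
`Γ₀(n)`-orbits of primitive vectors are exactly the cusps of `Γ₀(n)`. -/
def PrimitiveVec : Type := { v : Fin 2 → ℤ // IsCoprime (v 0) (v 1) }

/-
The `Γ₀(n)`-orbit of a primitive vector `(a, c)` is determined by `d = gcd(c, n)` and the class
of `a · (c / d)` in `(ℤ/gcd(d, n/d))ˣ`, and every pair `(d, u)` with `d ∣ n` occurs, realised by
`(a, d)` with `a` a lift of `u` to a unit mod `d`. Invariance is a computation mod `gcd(d, n/d)`.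
Conversely, the matrices of `SL₂(ℤ)` sending `v = (a, c)` to `w = (a', c')` are
`A_w [1, t; 0, 1] A_v⁻¹` with `A_v e₁ = v`, `A_w e₁ = w`, and equal invariants make `gcd(c c', n)`
divide the lower-left entry at `t = 0`, so that some `t` puts the matrix into `Γ₀(n)`.
-/

open CongruenceSubgroup
open scoped MatrixGroups

namespace Gamma0Cusps

theorem mulVec_fin_two_apply {R : Type*} [NonUnitalNonAssocSemiring R]
    (A : Matrix (Fin 2) (Fin 2) R) (v : Fin 2 → R) (i : Fin 2) :
    (A *ᵥ v) i = A i 0 * v 0 + A i 1 * v 1 := by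
  simp [mulVec, dotProduct, Fin.sum_univ_two]

theorem SL2_mul_sub_mul_eq_one {R : Type*} [CommRing R] (γ : SL(2, R)) :
    γ 0 0 * γ 1 1 - γ 0 1 * γ 1 0 = 1 := by
  rw [← det_fin_two]; exact γ.det_coe

variable {n : ℕ}

theorem natCast_dvd_of_mem_Gamma0 {γ : SL(2, ℤ)} (hγ : γ ∈ Gamma0 n) : (n : ℤ) ∣ γ 1 0 :=
  (ZMod.intCast_zmod_eq_zero_iff_dvd _ _).mp (Gamma0_mem.mp hγ)

theorem isCoprime_of_mem_Gamma0 {γ : SL(2, ℤ)} (hγ : γ ∈ Gamma0 n) : IsCoprime (γ 1 1) n := by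
  obtain ⟨q, hq⟩ := natCast_dvd_of_mem_Gamma0 hγ
  exact ⟨γ 0 0, -(γ 0 1 * q), by linear_combination SL2_mul_sub_mul_eq_one γ + γ 0 1 * hq⟩

def cuspDivisor (n : ℕ) (v : Fin 2 → ℤ) : ℕ := (v 1).gcd n

theorem cuspDivisor_dvd (v : Fin 2 → ℤ) : cuspDivisor n v ∣ n :=
  Int.natCast_dvd_natCast.mp (Int.gcd_dvd_right _ _)

theorem cuspDivisor_pos (hn : 0 < n) (v : Fin 2 → ℤ) : 0 < cuspDivisor n v :=
  Int.gcd_pos_of_ne_zero_right _ (by omega)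

theorem cuspDivisor_mul_ediv (v : Fin 2 → ℤ) :
    (cuspDivisor n v : ℤ) * (v 1 / cuspDivisor n v) = v 1 :=
  Int.mul_ediv_cancel' (Int.gcd_dvd_left _ _)

theorem isCoprime_ediv_cuspDivisor (hn : 0 < n) (v : Fin 2 → ℤ) :
    IsCoprime (v 1 / cuspDivisor n v) ((n / cuspDivisor n v : ℕ) : ℤ) := by
  rw [Int.isCoprime_iff_gcd_eq_one, Int.natCast_div]
  exact Int.gcd_ediv_gcd_ediv_gcd (cuspDivisor_pos hn v)

theorem intCast_apply_one_eq_zero (v : Fin 2 → ℤ) (k : ℕ) :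
    ((v 1 : ℤ) : ZMod ((cuspDivisor n v).gcd k)) = 0 :=
  (ZMod.intCast_zmod_eq_zero_iff_dvd _ _).mpr
    ((Int.natCast_dvd_natCast.mpr (Nat.gcd_dvd_left _ _)).trans (Int.gcd_dvd_left _ _))

theorem cuspDivisor_mulVec {γ : SL(2, ℤ)} (hγ : γ ∈ Gamma0 n) (v : Fin 2 → ℤ) :
    cuspDivisor n ((γ : Matrix (Fin 2) (Fin 2) ℤ) *ᵥ v) = cuspDivisor n v := by
  obtain ⟨q, hq⟩ := natCast_dvd_of_mem_Gamma0 hγ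
  have h : ((γ : Matrix (Fin 2) (Fin 2) ℤ) *ᵥ v) 1 = γ 1 1 * v 1 + n * (q * v 0) := by
    rw [mulVec_fin_two_apply, hq]; ring
  rw [cuspDivisor, h, Int.gcd_add_mul_left_left, Int.gcd_mul_right_left_of_gcd_eq_one
    (Int.isCoprime_iff_gcd_eq_one.mp (isCoprime_of_mem_Gamma0 hγ)), cuspDivisor]

-- Meaningful only for `d = cuspDivisor n v`; taking `d` as an argument puts the residues of
-- vectors with equal divisors in one ring.
def cuspResidue (n d : ℕ) (v : Fin 2 → ℤ) : ZMod (d.gcd (n / d)) :=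
  ((v 0 * (v 1 / d) : ℤ) : ZMod _)

theorem natCast_div_cuspDivisor_eq_zero (v : Fin 2 → ℤ) :
    ((n / cuspDivisor n v : ℕ) : ZMod ((cuspDivisor n v).gcd (n / cuspDivisor n v))) = 0 :=
  (ZMod.natCast_eq_zero_iff _ _).mpr (Nat.gcd_dvd_right _ _)

theorem natCast_eq_cuspDivisor_mul (v : Fin 2 → ℤ) :
    (n : ℤ) = cuspDivisor n v * (n / cuspDivisor n v : ℕ) := by
  rw [← Nat.cast_mul, Nat.mul_div_cancel' (cuspDivisor_dvd v)]

theorem cuspResidue_mulVec (hn : 0 < n) {γ : SL(2, ℤ)} (hγ : γ ∈ Gamma0 n) (v : Fin 2 → ℤ) :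
    cuspResidue n (cuspDivisor n v) ((γ : Matrix (Fin 2) (Fin 2) ℤ) *ᵥ v) =
      cuspResidue n (cuspDivisor n v) v := by
  have hw1 := cuspDivisor_mul_ediv (n := n) ((γ : Matrix (Fin 2) (Fin 2) ℤ) *ᵥ v)
  rw [cuspDivisor_mulVec hγ] at hw1
  have hv1 := cuspDivisor_mul_ediv (n := n) v
  have hn' := natCast_eq_cuspDivisor_mul (n := n) v
  have hd0 : (cuspDivisor n v : ℤ) ≠ 0 := by exact_mod_cast (cuspDivisor_pos hn v).ne'
  have hm0 := natCast_div_cuspDivisor_eq_zero (n := n) v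
  have hv1' := intCast_apply_one_eq_zero (n := n) v (n / cuspDivisor n v)
  have hγ10 : ((γ 1 0 : ℤ) : ZMod ((cuspDivisor n v).gcd (n / cuspDivisor n v))) = 0 :=
    (ZMod.intCast_zmod_eq_zero_iff_dvd _ _).mpr ((Int.natCast_dvd_natCast.mpr
      ((Nat.gcd_dvd_left _ _).trans (cuspDivisor_dvd v))).trans (natCast_dvd_of_mem_Gamma0 hγ))
  have hdet := congrArg (Int.cast : ℤ → ZMod ((cuspDivisor n v).gcd (n / cuspDivisor n v)))
    (SL2_mul_sub_mul_eq_one γ)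
  obtain ⟨q, hq⟩ := natCast_dvd_of_mem_Gamma0 hγ
  set d := cuspDivisor n v
  set m := n / d
  have hw0 := mulVec_fin_two_apply (γ : Matrix (Fin 2) (Fin 2) ℤ) v 0
  have hw1' := mulVec_fin_two_apply (γ : Matrix (Fin 2) (Fin 2) ℤ) v 1
  set w := (γ : Matrix (Fin 2) (Fin 2) ℤ) *ᵥ v
  set c₁ : ℤ := v 1 / d
  have hc₁' : w 1 / (d : ℤ) = m * q * v 0 + γ 1 1 * c₁ := mul_left_cancel₀ hd0 <| by
    linear_combination hw1 + hw1' + v 0 * hq + q * v 0 * hn' - γ 1 1 * hv1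
  -- Modulo `gcd(d, m)` the entries `v 1`, `m` and `γ₁₀` vanish, so the residue of `γ v` is
  -- `γ₀₀ γ₁₁ · v 0 · c₁ = (1 + γ₀₁ γ₁₀) · v 0 · c₁ = v 0 · c₁`.
  simp only [cuspResidue]
  rw [hc₁', hw0]
  push_cast at hdet ⊢
  linear_combination (γ 0 0 * v 0 * v 0 * q : ZMod (d.gcd m)) * hm0
    + (γ 0 1 * (m * q * v 0 + γ 1 1 * c₁) : ZMod (d.gcd m)) * hv1'
    + (v 0 * c₁ : ZMod (d.gcd m)) * hdet + (γ 0 1 * v 0 * c₁ : ZMod (d.gcd m)) * hγ10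

theorem isUnit_cuspResidue (hn : 0 < n) {v : Fin 2 → ℤ} (hv : IsCoprime (v 0) (v 1)) :
    IsUnit (cuspResidue n (cuspDivisor n v) v) := by
  obtain ⟨b, e, hbe⟩ := hv
  obtain ⟨u, k, huk⟩ := isCoprime_ediv_cuspDivisor hn v
  have hm0 := natCast_div_cuspDivisor_eq_zero (n := n) v
  have hv1 := intCast_apply_one_eq_zero (n := n) v (n / cuspDivisor n v)
  set d := cuspDivisor n v
  set c₁ : ℤ := v 1 / d
  have hbe' := congrArg (Int.cast : ℤ → ZMod (d.gcd (n / d))) hbe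
  have huk' := congrArg (Int.cast : ℤ → ZMod (d.gcd (n / d))) huk
  push_cast at hbe'
  simp only [Int.cast_add, Int.cast_mul, Int.cast_natCast, Int.cast_one] at huk'
  refine IsUnit.of_mul_eq_one ((b * u : ℤ) : ZMod (d.gcd (n / d))) ?_
  simp only [cuspResidue]
  push_cast
  linear_combination (u * c₁ : ZMod (d.gcd (n / d))) * hbe' + huk'
    - (u * c₁ * e : ZMod (d.gcd (n / d))) * hv1 - (k : ZMod (d.gcd (n / d))) * hm0

theorem heq_isUnit_unit_iff {m k : ℕ} (h : m = k) {x : ZMod m} (hx : IsUnit x)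
    (u : (ZMod k)ˣ) :
    HEq hx.unit u ↔ HEq x (u : ZMod k) := by
  subst h
  simp [Units.ext_iff]

noncomputable def cuspInvariant (hn : 0 < n) (v : PrimitiveVec) :
    Σ d : n.divisors, (ZMod ((d : ℕ).gcd (n / d)))ˣ :=
  ⟨⟨cuspDivisor n v.1, Nat.mem_divisors.mpr ⟨cuspDivisor_dvd v.1, hn.ne'⟩⟩,
    (isUnit_cuspResidue hn v.2).unit⟩

theorem cuspInvariant_eq_iff (hn : 0 < n) {v w : PrimitiveVec} :
    cuspInvariant hn v = cuspInvariant hn w ↔ cuspDivisor n w.1 = cuspDivisor n v.1 ∧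
      cuspResidue n (cuspDivisor n v.1) w.1 = cuspResidue n (cuspDivisor n v.1) v.1 := by
  simp only [cuspInvariant, Sigma.mk.inj_iff, Subtype.mk.injEq]
  refine ⟨fun ⟨hD, hu⟩ => ⟨hD.symm, ?_⟩, fun ⟨hD, hres⟩ => ⟨hD.symm, ?_⟩⟩
  · rw [heq_isUnit_unit_iff (by rw [hD]), IsUnit.unit_spec, ← hD] at hu
    exact (eq_of_heq hu).symm
  · rw [heq_isUnit_unit_iff (by rw [hD]), IsUnit.unit_spec, hD]
    exact heq_of_eq hres.symm

theorem cuspInvariant_surjective (hn : 0 < n) : Function.Surjective (cuspInvariant hn) := by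
  rintro ⟨⟨d, hd⟩, u⟩
  have hdn : d ∣ n := Nat.dvd_of_mem_divisors hd
  have : NeZero d := ⟨(Nat.pos_of_mem_divisors hd).ne'⟩
  obtain ⟨x, rfl⟩ := ZMod.unitsMap_surjective (Nat.gcd_dvd_left d (n / d)) u
  have hv : IsCoprime (![((x : ZMod d).val : ℤ), d] 0) (![((x : ZMod d).val : ℤ), d] 1) :=
    Nat.isCoprime_iff_coprime.mpr (ZMod.val_coe_unit_coprime x)
  have hD : cuspDivisor n ![((x : ZMod d).val : ℤ), d] = d := by
    simp [cuspDivisor, Nat.gcd_eq_left hdn]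
  refine ⟨(⟨_, hv⟩ : PrimitiveVec), Sigma.ext (Subtype.ext hD) ?_⟩
  refine (heq_isUnit_unit_iff (by rw [hD]) _ _).mpr ?_
  dsimp only
  rw [hD, heq_iff_eq]
  have hd0 : (d : ℤ) ≠ 0 := by exact_mod_cast NeZero.ne d
  simp [cuspResidue, ZMod.unitsMap_val, ZMod.natCast_val, Int.ediv_self hd0]

theorem exists_mem_Gamma0_mulVec_eq {v w : Fin 2 → ℤ} {b e b' e' t : ℤ}
    (hv : b * v 0 + e * v 1 = 1) (hw : b' * w 0 + e' * w 1 = 1)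
    (ht : (n : ℤ) ∣ w 1 * b - v 1 * b' - t * (v 1 * w 1)) :
    ∃ γ ∈ Gamma0 n, (γ : Matrix (Fin 2) (Fin 2) ℤ) *ᵥ v = w := by
  -- `γ = [w 0, -e'; w 1, b'] * [1, t; 0, 1] * [v 0, -e; v 1, b]⁻¹`
  let γ : SL(2, ℤ) :=
    ⟨!![w 0 * b - (w 0 * t - e') * v 1, w 0 * e + (w 0 * t - e') * v 0;
        w 1 * b - (w 1 * t + b') * v 1, w 1 * e + (w 1 * t + b') * v 0], by
      rw [det_fin_two_of]; linear_combination (b' * w 0 + e' * w 1) * hv + hw⟩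
  refine ⟨γ, Gamma0_mem.mpr ((ZMod.intCast_zmod_eq_zero_iff_dvd _ _).mpr ?_), ?_⟩
  · convert ht using 1
    simp [γ]
    ring
  · ext i
    fin_cases i <;> simp [γ, mulVec_fin_two_apply]
    · linear_combination w 0 * hv
    · linear_combination w 1 * hv

theorem exists_dvd_mul_sub_mul {d m c c' x : ℤ} (hcc' : IsCoprime (c * c') m)
    (hx : (d.gcd m : ℤ) ∣ x) : ∃ t, d * m ∣ d * x - t * (d * c * (d * c')) := by
  obtain ⟨u, k, huk⟩ := hcc'
  obtain ⟨s, rfl⟩ := hx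
  -- `t = u α s`, where `u` inverts `c c'` mod `m` and `gcd(d, m) = α d + β m`
  refine ⟨u * d.gcdA m * s, d.gcdB m * s + d.gcdA m * s * d * k, ?_⟩
  linear_combination d * s * Int.gcd_eq_gcd_ab d m - d.gcdA m * s * d ^ 2 * huk

theorem exists_mem_Gamma0_mulVec_eq_of_cuspResidue_eq (hn : 0 < n) {v w : PrimitiveVec}
    (hD : cuspDivisor n w.1 = cuspDivisor n v.1)
    (hres : cuspResidue n (cuspDivisor n v.1) w.1 = cuspResidue n (cuspDivisor n v.1) v.1) :
    ∃ γ ∈ Gamma0 n, (γ : Matrix (Fin 2) (Fin 2) ℤ) *ᵥ v.1 = w.1 := by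
  obtain ⟨b, e, hbe⟩ := v.2
  obtain ⟨b', e', hbe'⟩ := w.2
  have hcop' := isCoprime_ediv_cuspDivisor hn w.1
  have hv1 := intCast_apply_one_eq_zero (n := n) v.1 (n / cuspDivisor n v.1)
  have hw1 := intCast_apply_one_eq_zero (n := n) w.1 (n / cuspDivisor n v.1)
  have hc := cuspDivisor_mul_ediv (n := n) v.1
  have hc' := cuspDivisor_mul_ediv (n := n) w.1
  have hn' := natCast_eq_cuspDivisor_mul (n := n) v.1
  rw [hD] at hcop' hw1 hc'
  have hcop := (isCoprime_ediv_cuspDivisor hn v.1).mul_left hcop'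
  set d := cuspDivisor n v.1
  set g := d.gcd (n / d)
  set c₁ : ℤ := v.1 1 / d
  set c₁' : ℤ := w.1 1 / d
  have hx : ((g : ℕ) : ℤ) ∣ c₁' * b - c₁ * b' := by
    rw [← ZMod.intCast_zmod_eq_zero_iff_dvd]
    have hbe_g := congrArg (Int.cast : ℤ → ZMod g) hbe
    have hbe'_g := congrArg (Int.cast : ℤ → ZMod g) hbe'
    simp only [cuspResidue] at hres
    push_cast at hbe_g hbe'_g hres ⊢
    linear_combination (-c₁' * b : ZMod g) * hbe'_g + (b * b' : ZMod g) * hres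
      + (c₁ * b' : ZMod g) * hbe_g + (c₁' * b * e' : ZMod g) * hw1
      - (c₁ * b' * e : ZMod g) * hv1
  obtain ⟨t, ht⟩ := exists_dvd_mul_sub_mul hcop (d := d) (x := c₁' * b - c₁ * b')
    (by rwa [Int.gcd_natCast_natCast])
  refine exists_mem_Gamma0_mulVec_eq hbe hbe' (t := t) ?_
  rw [hn', ← hc, ← hc']
  convert ht using 1
  ring

theorem exists_mem_Gamma0_mulVec_eq_iff (hn : 0 < n) {v w : PrimitiveVec} :
    (∃ γ ∈ Gamma0 n, (γ : Matrix (Fin 2) (Fin 2) ℤ) *ᵥ v.1 = w.1) ↔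
      cuspInvariant hn v = cuspInvariant hn w := by
  rw [cuspInvariant_eq_iff]
  constructor
  · rintro ⟨γ, hγ, hγv⟩
    rw [← hγv]
    exact ⟨cuspDivisor_mulVec hγ v.1, cuspResidue_mulVec hn hγ v.1⟩
  · rintro ⟨hD, hres⟩
    exact exists_mem_Gamma0_mulVec_eq_of_cuspResidue_eq hn hD hres

end Gamma0Cusps

open Gamma0Cusps

/-- The number of cusps of `Γ₀(n)`, i.e. the number of orbits of `Γ₀(n)` acting on
`ℚ ∪ {∞}` (equivalently, on primitive vectors in `ℤ²`), equals
`Σ_{c | n} φ(gcd(c, n/c))`. -/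
theorem card_cusps_Gamma0 (n : ℕ) (hn : 0 < n)
    (r : PrimitiveVec → PrimitiveVec → Prop)
    (hr : ∀ v w : PrimitiveVec, r v w ↔
      ∃ γ : Matrix.SpecialLinearGroup (Fin 2) ℤ, γ ∈ CongruenceSubgroup.Gamma0 n ∧
        Matrix.mulVec (γ : Matrix (Fin 2) (Fin 2) ℤ) v.1 = w.1) :
    Nat.card (Quot r) = ∑ c ∈ n.divisors, Nat.totient (Nat.gcd c (n / c)) := by
  obtain rfl : r = Setoid.ker (cuspInvariant hn) := by
    ext v w
    exact (hr v w).trans (exists_mem_Gamma0_mulVec_eq_iff hn)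
  have (d : n.divisors) : NeZero ((d : ℕ).gcd (n / d)) :=
    ⟨(Nat.gcd_pos_of_pos_left _ (Nat.pos_of_mem_divisors d.2)).ne'⟩
  calc Nat.card (Quotient (Setoid.ker (cuspInvariant hn)))
      = Nat.card (Σ d : n.divisors, (ZMod ((d : ℕ).gcd (n / d)))ˣ) :=
        Nat.card_congr (Setoid.quotientKerEquivOfSurjective _ (cuspInvariant_surjective hn))
    _ = ∑ d : n.divisors, Nat.totient ((d : ℕ).gcd (n / d)) := by
        rw [Nat.card_sigma]
        simp only [Nat.card_eq_fintype_card, ZMod.card_units_eq_totient]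
    _ = ∑ c ∈ n.divisors, Nat.totient (c.gcd (n / c)) :=
        Finset.sum_coe_sort n.divisors fun c => Nat.totient (c.gcd (n / c))
end

section
/- For every positive integer n and every divisor c of n with c < n, (1/φ(n))·Σ_{k | n, k > 1} k·μ(n/k)·(1 − gcd(k,c)²/k) = 1. Equivalently, Σ_{k|n} k·μ(n/k) − Σ_{k|n} μ(n/k)·gcd(k,c)² = φ(n) when c is a proper divisor of n. -/
open Finset ArithmeticFunction
open scoped ArithmeticFunction.Moebius

namespace ArithmeticFunction

variable {R : Type*} [NonAssocRing R]

theorem sum_divisors_moebius_div_mul_eq {F G : ℕ → R}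
    (hFG : ∀ m > 0, ∑ d ∈ m.divisors, G d = F m) {n : ℕ} (hn : 0 < n) :
    ∑ k ∈ n.divisors, (μ (n / k) : R) * F k = G n := by
  rw [← sum_eq_iff_sum_mul_moebius_eq.mp hFG n hn,
    Nat.sum_divisorsAntidiagonal' (f := fun a b => (μ a : R) * F b)]

theorem sum_divisors_moebius_div_mul_totient {n : ℕ} (hn : 0 < n) :
    ∑ k ∈ n.divisors, (μ (n / k) : R) * k = n.totient :=
  sum_divisors_moebius_div_mul_eq (F := fun k => (k : R)) (G := fun k => (k.totient : R))
    (fun m _ => by rw [← Nat.cast_sum, Nat.sum_totient]) hn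

/-- `k ↦ f (gcd k c)` is the summatory function of `d ↦ [d ∣ c] · (μ * f) d`,
so Möbius inversion evaluates the sum. -/
theorem sum_divisors_moebius_div_mul_gcd (f : ℕ → R) (c : ℕ) {n : ℕ} (hn : 0 < n) :
    ∑ k ∈ n.divisors, (μ (n / k) : R) * f (k.gcd c) =
      if n ∣ c then ∑ x ∈ n.divisorsAntidiagonal, (μ x.1 : R) * f x.2 else 0 := by
  set g : ℕ → R := fun m => ∑ x ∈ m.divisorsAntidiagonal, (μ x.1 : R) * f x.2
  have hg : ∀ m > 0, ∑ d ∈ m.divisors, g d = f m :=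
    (sum_eq_iff_sum_mul_moebius_eq (R := R)).mpr fun _ _ => rfl
  refine sum_divisors_moebius_div_mul_eq (G := fun d => if d ∣ c then g d else 0)
    (fun k hk => ?_) hn
  have hgcd : 0 < k.gcd c := Nat.gcd_pos_of_pos_left c hk
  rw [← hg _ hgcd, ← Nat.divisors_filter_dvd_of_dvd hk.ne' (Nat.gcd_dvd_left k c), sum_filter]
  simp only [Nat.dvd_gcd_iff, ite_and]
  exact sum_congr rfl fun d hd => (if_pos (Nat.dvd_of_mem_divisors hd)).symm

end ArithmeticFunction

/-- For every positive integer `n` and every divisor `c` of `n` with `c < n`,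
`(1/φ(n)) · Σ_{k | n, k > 1} k·μ(n/k)·(1 − gcd(k,c)²/k) = 1`. -/
theorem constant_term_other_cusps (n c : ℕ) (hn : 0 < n) (hc : c ∣ n) (hcn : c < n) :
    (1 / (Nat.totient n : ℚ)) *
      ∑ k ∈ n.divisors.filter (fun k => 1 < k),
        (k : ℚ) * (ArithmeticFunction.moebius (n / k) : ℚ) *
          (1 - (Nat.gcd k c : ℚ) ^ 2 / (k : ℚ)) = 1 := by
  have hnc : ¬ n ∣ c := fun h =>
    hn.ne' (Nat.eq_zero_of_zero_dvd (Nat.eq_zero_of_dvd_of_lt h hcn ▸ hc))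
  have hterm : ∀ k ∈ n.divisors, (k : ℚ) * (μ (n / k) : ℚ) * (1 - (k.gcd c : ℚ) ^ 2 / k) =
      (μ (n / k) : ℚ) * k - (μ (n / k) : ℚ) * (k.gcd c : ℚ) ^ 2 := by
    intro k hk
    have : (k : ℚ) ≠ 0 := Nat.cast_ne_zero.mpr (Nat.pos_of_mem_divisors hk).ne'
    field_simp
  -- the term `k = 1` vanishes since `gcd 1 c = 1`
  rw [sum_filter_of_ne fun k hk hne => ?_, sum_congr rfl hterm, sum_sub_distrib,
    sum_divisors_moebius_div_mul_totient hn,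
    sum_divisors_moebius_div_mul_gcd (fun m => (m : ℚ) ^ 2) c hn, if_neg hnc, sub_zero,
    one_div_mul_cancel (mod_cast (Nat.totient_pos.mpr hn).ne')]
  have hk1 : k ≠ 1 := by rintro rfl; simp at hne
  have := Nat.pos_of_mem_divisors hk
  omega
end
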